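/- Let T₁, …, T₆ be the tetrahedra in ℝ³ with common vertex x₁=(0,0,0) given by T₁=[x₁,x₅,x₆,x₇], T₂=[x₁,x₅,x₇,x₈], T₃=[x₁,x₂,x₅,x₈], T₄=[x₁,x₂,x₃,x₅], T₅=[x₁,x₃,x₄,x₅], T₆=[x₁,x₄,x₅,x₆], where x₂=(−1,0,0), x₃=(−1,−1,0), x₄=(0,−1,0), x₅=(0,0,1), x₆=(1,0,1), x₇=(1,1,1), x₈=(0,1,1). Let φ be the piecewise quadratic equal to 4(z−1)(x−z) on T₁, 4(z−1)(y−z) on T₂, −4(y−z)(x−z+1) on T₃, 4(x−z+1)z on T₄, 4z(y−z+1) on T₅, −4(y−z+1)(x−z) on T₆, and let e be the piecewise cubic equal to x(2x−1)(x−1)/2 on T₁,T₂,T₆ and x(x+1)(2x+1)/2 on T₃,T₄,T₅. Then Σᵢ₌₁⁶ ∫_{Tᵢ} ∇e·∇φ dV = 0. -/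

import Mathlib

open MeasureTheory

noncomputable section

abbrev E3 := EuclideanSpace ℝ (Fin 3)

def pt (a b c : ℝ) : E3 := (WithLp.equiv 2 (Fin 3 → ℝ)).symm ![a, b, c]

def x₁ : E3 := pt 0 0 0
def x₂ : E3 := pt (-1) 0 0
def x₃ : E3 := pt (-1) (-1) 0
def x₄ : E3 := pt 0 (-1) 0
def x₅ : E3 := pt 0 0 1
def x₆ : E3 := pt 1 0 1
def x₇ : E3 := pt 1 1 1
def x₈ : E3 := pt 0 1 1

def T₁ : Set E3 := convexHull ℝ {x₁, x₅, x₆, x₇}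
def T₂ : Set E3 := convexHull ℝ {x₁, x₅, x₇, x₈}
def T₃ : Set E3 := convexHull ℝ {x₁, x₂, x₅, x₈}
def T₄ : Set E3 := convexHull ℝ {x₁, x₂, x₃, x₅}
def T₅ : Set E3 := convexHull ℝ {x₁, x₃, x₄, x₅}
def T₆ : Set E3 := convexHull ℝ {x₁, x₄, x₅, x₆}

/-- The pieces of the `P₂` nodal basis function `φ` on `T₁,…,T₆`. -/
def φ₁ : E3 → ℝ := fun p => 4 * (p 2 - 1) * (p 0 - p 2)
def φ₂ : E3 → ℝ := fun p => 4 * (p 2 - 1) * (p 1 - p 2)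
def φ₃ : E3 → ℝ := fun p => -4 * (p 1 - p 2) * (p 0 - p 2 + 1)
def φ₄ : E3 → ℝ := fun p => 4 * (p 0 - p 2 + 1) * p 2
def φ₅ : E3 → ℝ := fun p => 4 * p 2 * (p 1 - p 2 + 1)
def φ₆ : E3 → ℝ := fun p => -4 * (p 1 - p 2 + 1) * (p 0 - p 2)

/-- The interpolation-error pieces on `T₁,…,T₆`. -/
def e₁ : E3 → ℝ := fun p => p 0 * (2 * p 0 - 1) * (p 0 - 1) / 2
def e₂ : E3 → ℝ := fun p => p 0 * (2 * p 0 - 1) * (p 0 - 1) / 2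
def e₃ : E3 → ℝ := fun p => p 0 * (p 0 + 1) * (2 * p 0 + 1) / 2
def e₄ : E3 → ℝ := fun p => p 0 * (p 0 + 1) * (2 * p 0 + 1) / 2
def e₅ : E3 → ℝ := fun p => p 0 * (p 0 + 1) * (2 * p 0 + 1) / 2
def e₆ : E3 → ℝ := fun p => p 0 * (2 * p 0 - 1) * (p 0 - 1) / 2

/-! ### Auxiliary lemmas -/

section Aux

lemma diff_coord (i : Fin 3) : Differentiable ℝ (fun p : E3 => p i) :=
  (EuclideanSpace.proj (𝕜 := ℝ) i).differentiable

lemma gradient_comp_sub (f : E3 → ℝ) (hf : Differentiable ℝ f) (a p : E3) :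
    gradient (fun q => f (a - q)) p = - gradient f (a - p) := by
  have h1 : HasFDerivAt (fun q : E3 => a - q) (-(ContinuousLinearMap.id ℝ E3)) p :=
    (hasFDerivAt_id p).const_sub a
  have h2 : HasFDerivAt (fun q => f (a - q))
      ((fderiv ℝ f (a - p)).comp (-(ContinuousLinearMap.id ℝ E3))) p :=
    (hf (a - p)).hasFDerivAt.comp p h1
  have h3 : (fderiv ℝ f (a - p)).comp (-(ContinuousLinearMap.id ℝ E3))
      = -(fderiv ℝ f (a - p)) := by ext v; simp
  unfold gradient
  rw [h2.fderiv, h3, map_neg]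

lemma gradient_neg' (f : E3 → ℝ) (p : E3) :
    gradient (fun q => -(f q)) p = - gradient f p := by
  unfold gradient; rw [fderiv_fun_neg, map_neg]

lemma grad_flip_neg (f g : E3 → ℝ) (hg : Differentiable ℝ g)
    (h : ∀ p, g (x₅ - p) = - f p) (p : E3) : gradient g (x₅ - p) = gradient f p := by
  have h1 := gradient_comp_sub g hg x₅ p
  have h2 : (fun q => g (x₅ - q)) = fun q => -(f q) := funext fun q => h q
  rw [h2, gradient_neg'] at h1
  exact (neg_injective h1).symm

lemma grad_flip_pos (f g : E3 → ℝ) (hg : Differentiable ℝ g)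
    (h : ∀ p, g (x₅ - p) = f p) (p : E3) : gradient g (x₅ - p) = - gradient f p := by
  have h1 := gradient_comp_sub g hg x₅ p
  have h2 : (fun q => g (x₅ - q)) = f := funext fun q => h q
  rw [h2] at h1
  rw [h1, neg_neg]

lemma σ_invol : Function.Involutive (fun q : E3 => x₅ - q) := fun q => sub_sub_cancel x₅ q

lemma σ_image_hull (s : Set E3) :
    (fun q : E3 => x₅ - q) '' (convexHull ℝ s) = convexHull ℝ ((fun q : E3 => x₅ - q) '' s) := by
  have hA : ⇑(AffineMap.const ℝ E3 x₅ - AffineMap.id ℝ E3) = fun q : E3 => x₅ - q := rfl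
  rw [← hA, AffineMap.image_convexHull]

lemma preim {s t : Set E3} (h : (fun q : E3 => x₅ - q) '' s = t) :
    (fun q : E3 => x₅ - q) ⁻¹' t = s := by
  rw [← h, Set.preimage_image_eq _ σ_invol.injective]

lemma flip_integral (g : E3 → ℝ) (s : Set E3) :
    ∫ p in s, g p = ∫ p in (fun q : E3 => x₅ - q) ⁻¹' s, g (x₅ - p) :=
  ((MeasureTheory.Measure.measurePreserving_sub_left MeasureTheory.volume x₅).setIntegral_preimage_emb
    (MeasurableEquiv.subLeft x₅).measurableEmbedding g s).symm

lemma pt_sub (a b c a' b' c' : ℝ) : pt a b c - pt a' b' c' = pt (a-a') (b-b') (c-c') := by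
  simp only [pt]
  ext i; fin_cases i <;> simp

lemma hσ1 : x₅ - x₁ = x₅ := by rw [x₅, x₁, pt_sub]; norm_num
lemma hσ2 : x₅ - x₂ = x₆ := by rw [x₅, x₂, x₆, pt_sub]; norm_num
lemma hσ3 : x₅ - x₃ = x₇ := by rw [x₅, x₃, x₇, pt_sub]; norm_num
lemma hσ4 : x₅ - x₄ = x₈ := by rw [x₅, x₄, x₈, pt_sub]; norm_num
lemma hσ5 : x₅ - x₅ = x₁ := by rw [x₅, x₁, pt_sub]; norm_num
lemma hσ6 : x₅ - x₆ = x₂ := by rw [x₅, x₆, x₂, pt_sub]; norm_num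
lemma hσ7 : x₅ - x₇ = x₃ := by rw [x₅, x₇, x₃, pt_sub]; norm_num
lemma hσ8 : x₅ - x₈ = x₄ := by rw [x₅, x₈, x₄, pt_sub]; norm_num

lemma preT₄ : (fun q : E3 => x₅ - q) ⁻¹' T₄ = T₁ := by
  apply preim
  rw [T₁, T₄, σ_image_hull]
  congr 1
  simp only [Set.image_insert_eq, Set.image_singleton, hσ1, hσ5, hσ6, hσ7]
  ext q; simp only [Set.mem_insert_iff, Set.mem_singleton_iff]; tauto

lemma preT₅ : (fun q : E3 => x₅ - q) ⁻¹' T₅ = T₂ := by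
  apply preim
  rw [T₂, T₅, σ_image_hull]
  congr 1
  simp only [Set.image_insert_eq, Set.image_singleton, hσ1, hσ5, hσ7, hσ8]
  ext q; simp only [Set.mem_insert_iff, Set.mem_singleton_iff]; tauto

lemma preT₃ : (fun q : E3 => x₅ - q) ⁻¹' T₃ = T₆ := by
  apply preim
  rw [T₆, T₃, σ_image_hull]
  congr 1
  simp only [Set.image_insert_eq, Set.image_singleton, hσ1, hσ4, hσ5, hσ6]
  ext q; simp only [Set.mem_insert_iff, Set.mem_singleton_iff]; tauto

lemma coord0 (p : E3) : (x₅ - p) 0 = -(p 0) := by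
  simp [x₅, pt, PiLp.sub_apply]
lemma coord1 (p : E3) : (x₅ - p) 1 = -(p 1) := by
  simp [x₅, pt, PiLp.sub_apply]
lemma coord2 (p : E3) : (x₅ - p) 2 = 1 - p 2 := by
  simp [x₅, pt, PiLp.sub_apply]

lemma he₃ : Differentiable ℝ e₃ := by
  have h := diff_coord 0
  unfold e₃
  simp only [div_eq_mul_inv]
  exact ((h.mul (h.add_const 1)).mul ((h.const_mul 2).add_const 1)).mul_const _
lemma he₄ : Differentiable ℝ e₄ := he₃
lemma he₅ : Differentiable ℝ e₅ := he₃

lemma hφ₃ : Differentiable ℝ φ₃ := by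
  have h0 := diff_coord 0; have h1 := diff_coord 1; have h2 := diff_coord 2
  unfold φ₃
  exact (((h1.sub h2).const_mul (-4)).mul ((h0.sub h2).add_const 1))
lemma hφ₄ : Differentiable ℝ φ₄ := by
  have h0 := diff_coord 0; have h2 := diff_coord 2
  unfold φ₄
  exact ((((h0.sub h2).add_const 1).const_mul 4).mul h2)
lemma hφ₅ : Differentiable ℝ φ₅ := by
  have h1 := diff_coord 1; have h2 := diff_coord 2
  unfold φ₅
  exact ((h2.const_mul 4).mul ((h1.sub h2).add_const 1))

lemma flip_e₄ : ∀ p : E3, e₄ (x₅ - p) = - e₁ p := by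
  intro p; simp only [e₄, e₁, coord0]; ring
lemma flip_e₅ : ∀ p : E3, e₅ (x₅ - p) = - e₂ p := by
  intro p; simp only [e₅, e₂, coord0]; ring
lemma flip_e₃ : ∀ p : E3, e₃ (x₅ - p) = - e₆ p := by
  intro p; simp only [e₃, e₆, coord0]; ring
lemma flip_φ₄ : ∀ p : E3, φ₄ (x₅ - p) = φ₁ p := by
  intro p; simp only [φ₄, φ₁, coord0, coord2]; ring
lemma flip_φ₅ : ∀ p : E3, φ₅ (x₅ - p) = φ₂ p := by
  intro p; simp only [φ₅, φ₂, coord1, coord2]; ring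
lemma flip_φ₃ : ∀ p : E3, φ₃ (x₅ - p) = φ₆ p := by
  intro p; simp only [φ₃, φ₆, coord0, coord1, coord2]; ring

lemma pair (f F g G : E3 → ℝ) (hg : Differentiable ℝ g) (hG : Differentiable ℝ G)
    (hfg : ∀ p, g (x₅ - p) = - f p) (hFG : ∀ p, G (x₅ - p) = F p)
    {s t : Set E3} (hst : (fun q : E3 => x₅ - q) ⁻¹' t = s) :
    (∫ p in t, (inner ℝ (gradient g p) (gradient G p) : ℝ))
      = - ∫ p in s, (inner ℝ (gradient f p) (gradient F p) : ℝ) := by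
  rw [flip_integral (fun p => (inner ℝ (gradient g p) (gradient G p) : ℝ)) t, hst]
  have key : ∀ p : E3, (inner ℝ (gradient g (x₅ - p)) (gradient G (x₅ - p)) : ℝ)
      = - (inner ℝ (gradient f p) (gradient F p) : ℝ) := by
    intro p
    rw [grad_flip_neg f g hg hfg p, grad_flip_pos F G hG hFG p, inner_neg_right]
  simp only [key]
  exact MeasureTheory.integral_neg _

end Aux

/-- The sum of the six integrals `∫_{Tᵢ} ∇e·∇φ` vanishes (case `p = x³`). -/
theorem patch_orthogonality_x_cubed :
    (∫ p in T₁, (inner ℝ (gradient e₁ p) (gradient φ₁ p) : ℝ)) +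
    (∫ p in T₂, (inner ℝ (gradient e₂ p) (gradient φ₂ p) : ℝ)) +
    (∫ p in T₃, (inner ℝ (gradient e₃ p) (gradient φ₃ p) : ℝ)) +
    (∫ p in T₄, (inner ℝ (gradient e₄ p) (gradient φ₄ p) : ℝ)) +
    (∫ p in T₅, (inner ℝ (gradient e₅ p) (gradient φ₅ p) : ℝ)) +
    (∫ p in T₆, (inner ℝ (gradient e₆ p) (gradient φ₆ p) : ℝ)) = 0 := by
  have h14 := pair e₁ φ₁ e₄ φ₄ he₄ hφ₄ flip_e₄ flip_φ₄ preT₄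
  have h25 := pair e₂ φ₂ e₅ φ₅ he₅ hφ₅ flip_e₅ flip_φ₅ preT₅
  have h63 := pair e₆ φ₆ e₃ φ₃ he₃ hφ₃ flip_e₃ flip_φ₃ preT₃
  rw [h14, h25, h63]
  ring
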